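/- Let h : ℝⁿ → ℝ be convex and differentiable, and let λ > 0. Then the Moreau–Yosida envelope h^λ is differentiable and satisfies ‖∇h(x)‖ ≥ ‖∇h^λ(x)‖ for every x ∈ ℝⁿ. -/

import Mathlib

/-!
Fix `x` and let `p` minimise `z ↦ h z + ‖x - z‖² / (2λ)`; it exists because a convex differentiable
function lies above its tangent planes, so the objective is coercive. The first-order condition at
`p` says `∇h p = g := λ⁻¹ (x - p)`, and then the tangent plane of `h` at `p` gives
`mye y ≥ mye x + ⟪g, y - x⟫`, while testing the infimum at `p` gives
`mye y ≤ mye x + ⟪g, y - x⟫ + ‖y - x‖² / (2λ)`. Hence `∇ mye x = g = ∇h p`. Finally, monotonicity of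
the gradient of a convex function, `⟪∇h x - ∇h p, x - p⟫ ≥ 0` with `x - p = λ ∇h p`, yields
`‖∇h p‖² ≤ ⟪∇h x, ∇h p⟫`, so `‖∇h p‖ ≤ ‖∇h x‖`.
-/

/-- The Moreau–Yosida envelope of `h` with parameter `lam`. -/
noncomputable def mye {n : ℕ} (h : EuclideanSpace ℝ (Fin n) → ℝ) (lam : ℝ)
    (x : EuclideanSpace ℝ (Fin n)) : ℝ :=
  ⨅ z : EuclideanSpace ℝ (Fin n), (h z + ‖x - z‖ ^ 2 / (2 * lam))

open Set Filter Topology RealInnerProductSpace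

section NormedSpace

variable {E : Type*} [NormedAddCommGroup E] [NormedSpace ℝ E] {h : E → ℝ} {f' : E →L[ℝ] ℝ}
  {s : Set E} {x y : E}

theorem ConvexOn.add_fderiv_le (hh : ConvexOn ℝ s h) (hx : x ∈ s) (hy : y ∈ s)
    (hf : HasFDerivAt h f' x) : h x + f' (y - x) ≤ h y := by
  have hconv : ConvexOn ℝ (AffineMap.lineMap x y ⁻¹' s) (h ∘ AffineMap.lineMap x y) :=
    hh.comp_affineMap _
  have hderiv : HasDerivAt (h ∘ AffineMap.lineMap x y) (f' (y - x)) (0 : ℝ) :=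
    (by simpa using hf : HasFDerivAt h f' (AffineMap.lineMap x y (0 : ℝ))).comp_hasDerivAt 0
      AffineMap.hasDerivAt_lineMap
  have hslope := hconv.le_slope_of_hasDerivAt (x := 0) (y := 1) (by simpa using hx)
    (by simpa using hy) zero_lt_one hderiv
  simp only [slope_def_field, Function.comp_apply, AffineMap.lineMap_apply_zero,
    AffineMap.lineMap_apply_one, sub_zero, div_one] at hslope
  linarith

end NormedSpace

section InnerProductSpace

variable {F : Type*} [NormedAddCommGroup F] [InnerProductSpace ℝ F]
  {h : F → ℝ} {s : Set F} {a b g x y p : F} {lam : ℝ}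

theorem norm_le_of_sq_le_inner (hab : ‖b‖ ^ 2 ≤ ⟪a, b⟫) : ‖b‖ ≤ ‖a‖ := by
  rcases (norm_nonneg b).eq_or_lt with hb | hb
  · exact hb ▸ norm_nonneg a
  · refine le_of_mul_le_mul_right ?_ hb
    nlinarith [real_inner_le_norm a b]

theorem exists_isMinOn_add_norm_sub_sq_div [ProperSpace F] (hc : Continuous h)
    (hsub : ∀ z, h x + ⟪g, z - x⟫ ≤ h z) (hlam : 0 < lam) :
    ∃ p, IsMinOn (fun z => h z + ‖x - z‖ ^ 2 / (2 * lam)) univ p := by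
  set φ := fun z => h z + ‖x - z‖ ^ 2 / (2 * lam)
  have hcoercive : ∀ᶠ z in cocompact F, φ x ≤ φ z := by
    rw [hasBasis_cocompact.eventually_iff]
    refine ⟨Metric.closedBall x (2 * lam * ‖g‖), isCompact_closedBall _ _, fun z hz => ?_⟩
    have hr : 2 * lam * ‖g‖ < ‖z - x‖ := by simpa [dist_eq_norm] using hz
    have hcs : -(‖g‖ * ‖z - x‖) ≤ ⟪g, z - x⟫ :=
      neg_le_of_abs_le (abs_real_inner_le_norm g (z - x))
    have hquad : ‖g‖ * ‖z - x‖ ≤ ‖z - x‖ ^ 2 / (2 * lam) := by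
      rw [le_div_iff₀ (by positivity)]
      nlinarith [mul_le_mul_of_nonneg_left hr.le (norm_nonneg (z - x))]
    simp only [φ, sub_self, norm_zero, zero_pow two_ne_zero, zero_div, add_zero]
    rw [norm_sub_rev]
    linarith [hsub z]
  obtain ⟨p, hp⟩ := (by fun_prop : Continuous φ).exists_forall_le' x hcoercive
  exact ⟨p, fun z _ => hp z⟩

-- The gap is `h z - h p - ⟪λ⁻¹ (x - p), z - p⟫ + ‖(x - p) - (y - z)‖² / (2λ) ≥ 0`.
theorem add_inner_le_add_norm_sub_sq_div (hsub : ∀ z, h p + ⟪lam⁻¹ • (x - p), z - p⟫ ≤ h z)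
    (hlam : 0 < lam) (y z : F) :
    h p + ‖x - p‖ ^ 2 / (2 * lam) + ⟪lam⁻¹ • (x - p), y - x⟫ ≤ h z + ‖y - z‖ ^ 2 / (2 * lam) := by
  have hz := hsub z
  rw [show z - p = (x - p) - (y - z) + (y - x) by abel, inner_add_right, inner_sub_right] at hz
  simp only [real_inner_smul_left, real_inner_self_eq_norm_sq] at hz ⊢
  have hgap : 0 ≤ ‖x - p - (y - z)‖ ^ 2 / (2 * lam) := by positivity
  rw [norm_sub_sq_real] at hgap
  field_simp at hz hgap ⊢
  nlinarith

variable [CompleteSpace F]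

theorem ConvexOn.add_inner_le (hh : ConvexOn ℝ s h) (hx : x ∈ s) (hy : y ∈ s)
    (hg : HasGradientAt h g x) : h x + ⟪g, y - x⟫ ≤ h y := by
  simpa using hh.add_fderiv_le hx hy hg.hasFDerivAt

theorem ConvexOn.inner_sub_nonneg_of_hasGradientAt (hh : ConvexOn ℝ s h) (hx : x ∈ s)
    (hy : y ∈ s) (ha : HasGradientAt h a x) (hb : HasGradientAt h b y) : 0 ≤ ⟪a - b, x - y⟫ := by
  have hxy := hh.add_inner_le hx hy ha
  have hyx := hh.add_inner_le hy hx hb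
  have : ⟪a - b, x - y⟫ = -⟪a, y - x⟫ - ⟪b, x - y⟫ := by
    simp only [inner_sub_left, inner_sub_right]
    ring
  linarith

theorem ConvexOn.norm_le_of_hasGradientAt_inv_smul_sub (hh : ConvexOn ℝ univ h) (hlam : 0 < lam)
    (ha : HasGradientAt h a x) (hp : HasGradientAt h (lam⁻¹ • (x - p)) p) :
    ‖lam⁻¹ • (x - p)‖ ≤ ‖a‖ := by
  apply norm_le_of_sq_le_inner
  have hmono := hh.inner_sub_nonneg_of_hasGradientAt trivial trivial ha hp
  rw [← smul_inv_smul₀ hlam.ne' (x - p), inv_smul_smul₀ hlam.ne', real_inner_smul_right,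
    inner_sub_left, real_inner_self_eq_norm_sq] at hmono
  nlinarith

theorem IsLocalMin.hasGradientAt_eq_zero {f : F → ℝ} (hmin : IsLocalMin f x)
    (hg : HasGradientAt f g x) : g = 0 := by
  simpa using hmin.hasFDerivAt_eq_zero hg

theorem HasGradientAt.add {f₁ f₂ : F → ℝ} {g₁ g₂ : F} (h₁ : HasGradientAt f₁ g₁ x)
    (h₂ : HasGradientAt f₂ g₂ x) : HasGradientAt (f₁ + f₂) (g₁ + g₂) x := by
  rw [hasGradientAt_iff_hasFDerivAt, map_add]
  exact h₁.hasFDerivAt.add h₂.hasFDerivAt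

theorem hasGradientAt_norm_sub_sq_div (x z : F) (lam : ℝ) :
    HasGradientAt (fun z => ‖x - z‖ ^ 2 / (2 * lam)) (lam⁻¹ • (z - x)) z := by
  have := (((hasFDerivAt_id z).const_sub x).norm_sq).mul_const (2 * lam)⁻¹
  simp only [id, ← div_eq_mul_inv] at this
  refine this.congr_fderiv ?_
  ext w
  simp
  ring

theorem hasGradientAt_of_abs_sub_sub_inner_le {f : F → ℝ} (C : ℝ)
    (hf : ∀ v, |f (x + v) - f x - ⟪g, v⟫| ≤ C * ‖v‖ ^ 2) : HasGradientAt f g x := by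
  rw [hasGradientAt_iff_isLittleO_nhds_zero]
  refine (Asymptotics.isBigO_of_le' (c := C) (g := fun v : F => ‖v‖ ^ 2) (𝓝 0) fun v => ?_)
    |>.trans_isLittleO (Asymptotics.isLittleO_norm_pow_id one_lt_two)
  simpa using hf v

theorem IsMinOn.hasGradientAt_eq_inv_smul_sub
    (hmin : IsMinOn (fun z => h z + ‖x - z‖ ^ 2 / (2 * lam)) univ p) (hg : HasGradientAt h g p) :
    g = lam⁻¹ • (x - p) := by
  have := (hmin.isLocalMin univ_mem).hasGradientAt_eq_zero
    (hg.add (hasGradientAt_norm_sub_sq_div x p lam))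
  rw [← neg_sub p x, smul_neg]
  exact eq_neg_of_add_eq_zero_left this

end InnerProductSpace

section MoreauYosida

variable {n : ℕ} {h : EuclideanSpace ℝ (Fin n) → ℝ} {lam : ℝ} {x p : EuclideanSpace ℝ (Fin n)}

theorem add_inner_le_mye (hsub : ∀ z, h p + ⟪lam⁻¹ • (x - p), z - p⟫ ≤ h z) (hlam : 0 < lam)
    (y : EuclideanSpace ℝ (Fin n)) :
    h p + ‖x - p‖ ^ 2 / (2 * lam) + ⟪lam⁻¹ • (x - p), y - x⟫ ≤ mye h lam y :=
  le_ciInf (add_inner_le_add_norm_sub_sq_div hsub hlam y)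

theorem mye_le (hsub : ∀ z, h p + ⟪lam⁻¹ • (x - p), z - p⟫ ≤ h z) (hlam : 0 < lam)
    (y z : EuclideanSpace ℝ (Fin n)) : mye h lam y ≤ h z + ‖y - z‖ ^ 2 / (2 * lam) :=
  ciInf_le ⟨_, forall_mem_range.2 (add_inner_le_add_norm_sub_sq_div hsub hlam y)⟩ z

theorem mye_eq (hsub : ∀ z, h p + ⟪lam⁻¹ • (x - p), z - p⟫ ≤ h z) (hlam : 0 < lam) :
    mye h lam x = h p + ‖x - p‖ ^ 2 / (2 * lam) :=
  le_antisymm (mye_le hsub hlam x p) (by simpa using add_inner_le_mye hsub hlam x)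

theorem hasGradientAt_mye (hsub : ∀ z, h p + ⟪lam⁻¹ • (x - p), z - p⟫ ≤ h z) (hlam : 0 < lam) :
    HasGradientAt (mye h lam) (lam⁻¹ • (x - p)) x := by
  refine hasGradientAt_of_abs_sub_sub_inner_le (2 * lam)⁻¹ fun v => abs_le.2 ⟨?_, ?_⟩
  · have hlower := add_inner_le_mye hsub hlam (x + v)
    rw [add_sub_cancel_left] at hlower
    rw [mye_eq hsub hlam]
    have : 0 ≤ (2 * lam)⁻¹ * ‖v‖ ^ 2 := by positivity
    linarith
  · have hupper := mye_le hsub hlam (x + v) p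
    rw [show x + v - p = (x - p) + v by abel, norm_add_sq_real] at hupper
    rw [mye_eq hsub hlam, real_inner_smul_left]
    field_simp at hupper ⊢
    linarith

theorem exists_hasGradientAt_inv_smul_sub_and_hasGradientAt_mye (hconv : ConvexOn ℝ univ h)
    (hdiff : Differentiable ℝ h) (hlam : 0 < lam) (x : EuclideanSpace ℝ (Fin n)) :
    ∃ p, HasGradientAt h (lam⁻¹ • (x - p)) p ∧ HasGradientAt (mye h lam) (lam⁻¹ • (x - p)) x := by
  obtain ⟨p, hmin⟩ := exists_isMinOn_add_norm_sub_sq_div hdiff.continuous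
    (fun z => hconv.add_inner_le trivial trivial (hdiff x).hasGradientAt) hlam
  have hp : HasGradientAt h (lam⁻¹ • (x - p)) p :=
    hmin.hasGradientAt_eq_inv_smul_sub (hdiff p).hasGradientAt ▸ (hdiff p).hasGradientAt
  exact ⟨p, hp, hasGradientAt_mye (fun z => hconv.add_inner_le trivial trivial hp) hlam⟩

end MoreauYosida

theorem stmt_7 {n : ℕ} (h : EuclideanSpace ℝ (Fin n) → ℝ) (lam : ℝ)
    (hconv : ConvexOn ℝ Set.univ h) (hdiff : Differentiable ℝ h)
    (hlam : 0 < lam) :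
    Differentiable ℝ (mye h lam) ∧
    ∀ x : EuclideanSpace ℝ (Fin n),
      ‖gradient (mye h lam) x‖ ≤ ‖gradient h x‖ := by
  have prox := exists_hasGradientAt_inv_smul_sub_and_hasGradientAt_mye hconv hdiff hlam
  refine ⟨fun x => (prox x).choose_spec.2.differentiableAt, fun x => ?_⟩
  obtain ⟨p, hp, hmye⟩ := prox x
  rw [hmye.gradient]
  exact hconv.norm_le_of_hasGradientAt_inv_smul_sub hlam (hdiff x).hasGradientAt hp
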